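/- arXiv:1901.06353 — 2 statements merged into one kernel-verified Lean document; each statement's English description precedes it below -/
import Mathlib

section
/- Let a, b, c ∈ ℂ with s := a + b + c ≠ 0, set A = bc/s, B = ca/s, C = ab/s. Let V be a finite set, let W = {v1, v2, v3} ⊔ V, and let D be an arbitrary complex matrix indexed by W. Define the matrix M indexed by {u} ⊔ W by: M(u,u) = s; M(u,v1) = M(v1,u) = −a, M(u,v2) = M(v2,u) = −b, M(u,v3) = M(v3,u) = −c; M(u,x) = M(x,u) = 0 for x ∈ V; and M(x,y) = D(x,y) + δ(x,y)·d(x) for x, y ∈ W, where d(v1) = a, d(v2) = b, d(v3) = c, and d(x) = 0 for x ∈ V. Let T be the matrix indexed by W that equals the triangle Laplacian [[B+C, −C, −B], [−C, C+A, −A], [−B, −A, A+B]] on the block {v1, v2, v3} and is zero in all other entries. Then det M = s · det(D + T). -/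
/-!
Eliminating the star vertex `u` is taking a Schur complement: `det M` is `s` times the
determinant of the complement of the `u`-block, which is `D + diag d - s⁻¹ d dᵀ`. The rank-one correction vanishes
off the triangle block, and on it `diag (a, b, c) - s⁻¹ (a, b, c)ᵀ(a, b, c)` is exactly the
triangle Laplacian, since e.g. `a - a²/s = a(b + c)/s = B + C` and `-ab/s = -C`.
-/

open Matrix

theorem det_fromBlocks_scalar₁₁ {K n : Type*} [Field K] [Fintype n] [DecidableEq n]
    {s : K} (hs : s ≠ 0) (u v : n → K) (D : Matrix n n K) :
    (fromBlocks (of fun _ _ => s : Matrix Unit Unit K) (replicateRow Unit u)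
      (replicateCol Unit v) D).det = s * (D - s⁻¹ • vecMulVec v u).det := by
  let _ : Invertible (of fun _ _ => s : Matrix Unit Unit K) :=
    ⟨of fun _ _ => s⁻¹, by ext; simp [mul_apply, hs], by ext; simp [mul_apply, hs]⟩
  have hcomplement : replicateCol Unit v * ⅟(of fun _ _ => s : Matrix Unit Unit K) *
      replicateRow Unit u = s⁻¹ • vecMulVec v u := by
    ext i j
    simp [mul_apply, vecMulVec_apply]
    ring
  rw [det_fromBlocks₁₁, det_unique, hcomplement, of_apply]

theorem diagonal_sub_smul_vecMulVec_elim_zero {K m n : Type*} [Ring K] [DecidableEq m]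
    [DecidableEq n] (r : K) (x : m → K) :
    diagonal (Sum.elim x 0) - r • vecMulVec (Sum.elim x 0) (Sum.elim x 0) =
      (fromBlocks (diagonal x - r • vecMulVec x x) 0 0 0 : Matrix (m ⊕ n) (m ⊕ n) K) := by
  ext (i | i) (j | j) <;> simp [diagonal_apply, vecMulVec_apply]

theorem star_schur_complement_eq_triangle {K : Type*} [Field K] (a b c : K)
    (hs : a + b + c ≠ 0) :
    diagonal ![a, b, c] - (a + b + c)⁻¹ • vecMulVec ![a, b, c] ![a, b, c] =
      !![c * a / (a + b + c) + a * b / (a + b + c), -(a * b / (a + b + c)),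
          -(c * a / (a + b + c));
        -(a * b / (a + b + c)), a * b / (a + b + c) + b * c / (a + b + c),
          -(b * c / (a + b + c));
        -(c * a / (a + b + c)), -(b * c / (a + b + c)),
          b * c / (a + b + c) + c * a / (a + b + c)] := by
  ext i j
  fin_cases i <;> fin_cases j <;> simp <;> field_simp <;> ring

/-- Performing a Y–Δ move inside an arbitrary ambient network multiplies the determinant of
the Laplacian by `s = a + b + c`: if `M` is obtained from an arbitrary matrix `D` (indexed by
`W = Fin 3 ⊕ V`) by adjoining the star vertex `u` with conductances `a, b, c` to the three
triangle vertices, and `T` is the triangle Laplacian with conductances `A = bc/s, B = ca/s,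
C = ab/s`, then `det M = s * det (D + T)`. -/
theorem yDelta_det_identity {V : Type*} [Fintype V] [DecidableEq V]
    (a b c : ℂ) (hs : a + b + c ≠ 0)
    (D : Matrix (Fin 3 ⊕ V) (Fin 3 ⊕ V) ℂ) :
    let s := a + b + c
    let A := b * c / s
    let B := c * a / s
    let C := a * b / s
    let d : Fin 3 ⊕ V → ℂ := Sum.elim ![a, b, c] 0
    let M : Matrix (Unit ⊕ (Fin 3 ⊕ V)) (Unit ⊕ (Fin 3 ⊕ V)) ℂ :=
      Matrix.fromBlocks (Matrix.of fun _ _ => s) (Matrix.of fun _ x => -(d x))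
        (Matrix.of fun x _ => -(d x)) (Matrix.of fun x y => D x y + if x = y then d x else 0)
    let T : Matrix (Fin 3 ⊕ V) (Fin 3 ⊕ V) ℂ :=
      Matrix.fromBlocks !![B + C, -C, -B; -C, C + A, -A; -B, -A, A + B] 0 0 0
    M.det = s * (D + T).det := by
  intro s A B C d M T
  have hM : M = fromBlocks (of fun _ _ => s) (replicateRow Unit (-d)) (replicateCol Unit (-d))
      (D + diagonal d) := rfl
  rw [hM, det_fromBlocks_scalar₁₁ hs, neg_vecMulVec, vecMulVec_neg, neg_neg, add_sub_assoc,
    diagonal_sub_smul_vecMulVec_elim_zero, star_schur_complement_eq_triangle a b c hs]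
end

section
/- Let G be a finite undirected graph with vertex set V and edge set E, let c : E → ℂ be an edge weight (conductance) function, and let φ be a connection on G, i.e., an assignment of a nonzero complex number φ_{u→v} to each directed edge (u,v) of G such that φ_{v→u} = (φ_{u→v})^{-1}. Let Δ be the line bundle Laplacian: the V × V matrix with Δ(v,v) = Σ_{u ∼ v} c(uv) and Δ(v,u) = −c(uv)·φ_{u→v} for u adjacent to v (and 0 otherwise). Then det Δ = Σ_γ (Π_{e ∈ γ} c(e)) · Π_η (1 − m(η)), where the sum is over all oriented cycle rooted spanning forests (OCRSFs) γ of G, the product over η runs over the oriented cycles of γ, and m(η) denotes the monodromy of the connection φ around the oriented cycle η, i.e., the product of the parallel transports φ along the directed edges of η. -/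
/-!
Expand `det Δ` over permutations `σ`, and expand each diagonal entry `Δ v v = ∑_w c(vw)` over
a choice of neighbour `w`. Every term is then indexed by a map `g : V → V` with `v ∼ g v`, and
the permutations contributing to `g` are those that agree with `g` wherever they move a point:
their nontrivial cycles are cycles of the functional graph of `g`, so they correspond to subsets
of the cycles of `g`. A cycle `η` with `k` vertices contributes the sign `-(-1)^k` and the factor
`(-1)^k m(η)` from the off-diagonal entries, so the sum over subsets is `∏_η (1 - m(η))`.
Maps with a 2-cycle `v ↔ u` are not OCRSFs, but they contribute `0`: the monodromy of that
cycle is `φ u v * φ v u = 1`.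
-/

open Finset Function Equiv

namespace FunctionalGraph

variable {V : Type*} [Fintype V] [DecidableEq V] {f : V → V} {v x : V}

def periodicPtsFinset (f : V → V) : Finset V :=
  univ.filter fun v => ((Icc 1 (Fintype.card V)).filter fun n => f^[n] v = v).Nonempty

def orbit (f : V → V) (v : V) : Finset V :=
  (range (Fintype.card V)).image fun k => f^[k] v

def cycles (f : V → V) : Finset (Finset V) :=
  (periodicPtsFinset f).image (orbit f)

theorem mem_periodicPtsFinset : v ∈ periodicPtsFinset f ↔ v ∈ periodicPts f := by
  simp only [periodicPtsFinset, mem_filter, mem_univ, true_and, filter_nonempty_iff, mem_Icc]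
  constructor
  · rintro ⟨n, ⟨hn, -⟩, hper⟩
    exact mk_mem_periodicPts hn hper
  · intro hv
    exact ⟨minimalPeriod f v,
      ⟨minimalPeriod_pos_of_mem_periodicPts hv, minimalPeriod_le_card⟩, iterate_minimalPeriod⟩

theorem mem_orbit (hv : v ∈ periodicPts f) : x ∈ orbit f v ↔ x ∈ periodicOrbit f v := by
  rw [mem_periodicOrbit_iff hv]
  simp only [orbit, mem_image, mem_range]
  refine ⟨fun ⟨k, _, hk⟩ => ⟨k, hk⟩, ?_⟩
  rintro ⟨k, rfl⟩
  exact ⟨k % minimalPeriod f v,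
    (Nat.mod_lt _ (minimalPeriod_pos_of_mem_periodicPts hv)).trans_le minimalPeriod_le_card,
    iterate_mod_minimalPeriod_eq⟩

theorem self_mem_orbit (hv : v ∈ periodicPts f) : v ∈ orbit f v :=
  (mem_orbit hv).2 (self_mem_periodicOrbit hv)

theorem orbit_iterate (hv : v ∈ periodicPts f) (k : ℕ) : orbit f (f^[k] v) = orbit f v := by
  ext x
  rw [mem_orbit hv, mem_orbit (((bijOn_periodicPts (f := f)).mapsTo.iterate k) hv),
    periodicOrbit_apply_iterate_eq hv]

theorem orbit_apply (hv : v ∈ periodicPts f) : orbit f (f v) = orbit f v :=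
  orbit_iterate hv 1

theorem mem_periodicPts_and_orbit_eq_of_mem_orbit (hv : v ∈ periodicPts f)
    (hx : x ∈ orbit f v) : x ∈ periodicPts f ∧ orbit f x = orbit f v := by
  obtain ⟨k, rfl⟩ := (mem_periodicOrbit_iff hv).1 ((mem_orbit hv).1 hx)
  exact ⟨(bijOn_periodicPts (f := f)).mapsTo.iterate k hv, orbit_iterate hv k⟩

theorem orbit_mem_cycles (hv : v ∈ periodicPts f) : orbit f v ∈ cycles f :=
  mem_image_of_mem _ (mem_periodicPtsFinset.2 hv)

theorem mem_cycles {η : Finset V} : η ∈ cycles f ↔ ∃ v ∈ periodicPts f, orbit f v = η := by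
  simp only [cycles, mem_image, mem_periodicPtsFinset]

theorem mem_periodicPts_and_orbit_eq_of_mem_cycles {η : Finset V} (hη : η ∈ cycles f)
    (hx : x ∈ η) : x ∈ periodicPts f ∧ orbit f x = η := by
  obtain ⟨v, hv, rfl⟩ := mem_cycles.1 hη
  exact mem_periodicPts_and_orbit_eq_of_mem_orbit hv hx

theorem pairwiseDisjoint_cycles : (cycles f : Set (Finset V)).PairwiseDisjoint id := by
  intro η hη η' hη' hne
  refine Finset.disjoint_left.2 fun x hx hx' => hne ?_
  rw [← (mem_periodicPts_and_orbit_eq_of_mem_cycles hη hx).2,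
    (mem_periodicPts_and_orbit_eq_of_mem_cycles hη' hx').2]

theorem pair_mem_cycles (h : f (f v) = v) : {v, f v} ∈ cycles f := by
  have hv : v ∈ periodicPts f := mk_mem_periodicPts two_pos h
  convert orbit_mem_cycles hv using 1
  ext x
  rw [mem_orbit hv, mem_periodicOrbit_iff hv, mem_insert, mem_singleton]
  constructor
  · rintro (rfl | rfl)
    exacts [⟨0, rfl⟩, ⟨1, rfl⟩]
  · rintro ⟨n, rfl⟩
    rw [← IsPeriodicPt.iterate_mod_apply (n := 2) h]
    rcases Nat.mod_two_eq_zero_or_one n with hn | hn <;> simp [hn]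

def compatiblePerms (f : V → V) : Finset (Perm V) :=
  univ.filter fun σ => ∀ x, σ x ≠ x → σ x = f x

theorem mem_compatiblePerms {σ : Perm V} :
    σ ∈ compatiblePerms f ↔ ∀ x, σ x ≠ x → σ x = f x := by
  simp [compatiblePerms]

section compatiblePerms

variable {σ : Perm V} (hσ : σ ∈ compatiblePerms f)
include hσ

theorem iterate_apply_eq_of_mem_compatiblePerms (hx : x ∈ σ.support) (k : ℕ) :
    σ^[k] x = f^[k] x := by
  induction k with
  | zero => rfl
  | succ k ih =>
    have hk : σ^[k] x ∈ σ.support := by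
      rw [Perm.iterate_eq_pow]
      exact Perm.pow_apply_mem_support.2 hx
    rw [iterate_succ_apply', iterate_succ_apply', ← ih,
      mem_compatiblePerms.1 hσ _ (Perm.mem_support.1 hk)]

theorem mem_periodicPts_of_mem_compatiblePerms (hx : x ∈ σ.support) : x ∈ periodicPts f := by
  obtain ⟨n, hn, hper⟩ := mem_periodicPts.1 (σ.injective.mem_periodicPts x)
  refine mk_mem_periodicPts hn ?_
  rw [IsPeriodicPt, IsFixedPt, ← iterate_apply_eq_of_mem_compatiblePerms hσ hx]
  exact hper

theorem orbit_subset_support_of_mem_compatiblePerms (hx : x ∈ σ.support) :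
    orbit f x ⊆ σ.support := by
  have hxp := mem_periodicPts_of_mem_compatiblePerms hσ hx
  intro z hz
  obtain ⟨k, rfl⟩ := (mem_periodicOrbit_iff hxp).1 ((mem_orbit hxp).1 hz)
  rw [← iterate_apply_eq_of_mem_compatiblePerms hσ hx, Perm.iterate_eq_pow]
  exact Perm.pow_apply_mem_support.2 hx

end compatiblePerms

def cycleSupport (f : V → V) (S : Finset (Finset V)) : Finset V :=
  (periodicPtsFinset f).filter fun x => orbit f x ∈ S

variable {S : Finset (Finset V)}

theorem mem_cycleSupport : x ∈ cycleSupport f S ↔ x ∈ periodicPts f ∧ orbit f x ∈ S := by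
  rw [cycleSupport, mem_filter, mem_periodicPtsFinset]

theorem apply_mem_cycleSupport (hx : x ∈ cycleSupport f S) : f x ∈ cycleSupport f S := by
  rw [mem_cycleSupport] at hx ⊢
  exact ⟨(bijOn_periodicPts (f := f)).mapsTo hx.1, (orbit_apply hx.1).symm ▸ hx.2⟩

theorem injective_ite_cycleSupport :
    Injective fun x => if x ∈ cycleSupport f S then f x else x := by
  intro x y h
  by_cases hx : x ∈ cycleSupport f S <;> by_cases hy : y ∈ cycleSupport f S <;>
    simp only [hx, hy, if_true, if_false] at h
  · exact (bijOn_periodicPts (f := f)).injOn (mem_cycleSupport.1 hx).1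
      (mem_cycleSupport.1 hy).1 h
  · exact absurd (h ▸ apply_mem_cycleSupport hx) hy
  · exact absurd (h.symm ▸ apply_mem_cycleSupport hy) hx
  · exact h

noncomputable def cyclePerm (f : V → V) (S : Finset (Finset V)) : Perm V :=
  Equiv.ofBijective _ <|
    Finite.injective_iff_bijective.1 (injective_ite_cycleSupport (f := f) (S := S))

theorem cyclePerm_apply : cyclePerm f S x = if x ∈ cycleSupport f S then f x else x := rfl

theorem cyclePerm_mem_compatiblePerms : cyclePerm f S ∈ compatiblePerms f := by
  refine mem_compatiblePerms.2 fun x hx => ?_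
  rw [cyclePerm_apply] at hx ⊢
  split_ifs at hx ⊢
  exacts [rfl, absurd rfl hx]

theorem support_cyclePerm (hf : ∀ x, f x ≠ x) : (cyclePerm f S).support = cycleSupport f S := by
  ext x
  rw [Perm.mem_support, cyclePerm_apply]
  by_cases hx : x ∈ cycleSupport f S <;> simp [hx, hf x]

theorem cycleSupport_eq_biUnion (hS : S ⊆ cycles f) : cycleSupport f S = S.biUnion id := by
  ext x
  rw [mem_cycleSupport, mem_biUnion]
  constructor
  · rintro ⟨hx, hxS⟩
    exact ⟨orbit f x, hxS, self_mem_orbit hx⟩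
  · rintro ⟨η, hη, hx⟩
    obtain ⟨hxp, rfl⟩ := mem_periodicPts_and_orbit_eq_of_mem_cycles (hS hη) hx
    exact ⟨hxp, hη⟩

theorem cyclePerm_image_orbit_support {σ : Perm V} (hσ : σ ∈ compatiblePerms f) :
    cyclePerm f (σ.support.image (orbit f)) = σ := by
  ext x
  rw [cyclePerm_apply]
  by_cases hx : x ∈ σ.support
  · rw [if_pos (mem_cycleSupport.2 ⟨mem_periodicPts_of_mem_compatiblePerms hσ hx,
      mem_image_of_mem _ hx⟩), mem_compatiblePerms.1 hσ x (Perm.mem_support.1 hx)]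
  · rw [Perm.notMem_support.1 hx, if_neg]
    rintro hxS
    obtain ⟨hxp, y, hy, hyx⟩ := (mem_cycleSupport.1 hxS).imp_right mem_image.1
    exact hx (orbit_subset_support_of_mem_compatiblePerms hσ hy (hyx ▸ self_mem_orbit hxp))

theorem image_orbit_support_cyclePerm (hf : ∀ x, f x ≠ x) (hS : S ⊆ cycles f) :
    (cyclePerm f S).support.image (orbit f) = S := by
  ext η
  rw [mem_image, support_cyclePerm hf]
  constructor
  · rintro ⟨x, hx, rfl⟩
    exact (mem_cycleSupport.1 hx).2
  · intro hη
    obtain ⟨v, hv, rfl⟩ := mem_cycles.1 (hS hη)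
    exact ⟨v, mem_cycleSupport.2 ⟨hv, hη⟩, rfl⟩

theorem cyclePerm_insert {η : Finset V} (hη : η ∉ S) :
    cyclePerm f (insert η S) = cyclePerm f {η} * cyclePerm f S := by
  ext x
  simp only [Perm.mul_apply, cyclePerm_apply, cycleSupport, mem_filter, mem_insert,
    mem_singleton]
  by_cases hx : x ∈ periodicPts f
  · have hfx := mem_periodicPtsFinset.2 ((bijOn_periodicPts (f := f)).mapsTo hx)
    by_cases hxη : orbit f x = η
    · subst hxη
      simp [mem_periodicPtsFinset.2 hx, hη]
    · by_cases hxS : orbit f x ∈ S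
      · simp [mem_periodicPtsFinset.2 hx, hfx, hxη, hxS, orbit_apply hx]
      · simp [mem_periodicPtsFinset.2 hx, hxη, hxS]
  · simp [mem_periodicPtsFinset, hx]

theorem isCycle_cyclePerm_singleton (hf : ∀ x, f x ≠ x) {η : Finset V} (hη : η ∈ cycles f) :
    (cyclePerm f {η}).IsCycle := by
  obtain ⟨v, hv, rfl⟩ := mem_cycles.1 hη
  have hvs : v ∈ (cyclePerm f {orbit f v}).support := by
    rw [support_cyclePerm hf, mem_cycleSupport]
    exact ⟨hv, mem_singleton_self _⟩
  refine ⟨v, Perm.mem_support.1 hvs, fun y hy => ?_⟩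
  rw [← Perm.mem_support, support_cyclePerm hf, mem_cycleSupport, mem_singleton] at hy
  obtain ⟨k, rfl⟩ :=
    (mem_periodicOrbit_iff hv).1 ((mem_orbit hv).1 (hy.2 ▸ self_mem_orbit hy.1))
  refine ⟨k, ?_⟩
  rw [zpow_natCast, ← Perm.iterate_eq_pow,
    iterate_apply_eq_of_mem_compatiblePerms cyclePerm_mem_compatiblePerms hvs]

theorem sign_cyclePerm (hf : ∀ x, f x ≠ x) (hS : S ⊆ cycles f) :
    Perm.sign (cyclePerm f S) = ∏ η ∈ S, -(-1) ^ #η := by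
  induction S using Finset.induction_on with
  | empty =>
    have : cyclePerm f ∅ = 1 := by
      ext x
      simp [cyclePerm_apply, mem_cycleSupport]
    rw [this, map_one, prod_empty]
  | insert η S hηS ih =>
    have hη : η ∈ cycles f := hS (mem_insert_self η S)
    rw [cyclePerm_insert hηS, map_mul, prod_insert hηS, ih ((subset_insert η S).trans hS),
      (isCycle_cyclePerm_singleton hf hη).sign, support_cyclePerm hf,
      cycleSupport_eq_biUnion (singleton_subset_iff.2 hη), singleton_biUnion, id]

theorem image_orbit_support_subset_cycles {σ : Perm V} (hσ : σ ∈ compatiblePerms f) :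
    σ.support.image (orbit f) ⊆ cycles f := by
  intro η hη
  obtain ⟨x, hx, rfl⟩ := mem_image.1 hη
  exact orbit_mem_cycles (mem_periodicPts_of_mem_compatiblePerms hσ hx)

theorem sum_compatiblePerms_sign_mul_prod_support {R : Type*} [CommRing R]
    (hf : ∀ x, f x ≠ x) (ψ : V → R) :
    ∑ σ ∈ compatiblePerms f, ((Perm.sign σ : ℤ) : R) * ∏ x ∈ σ.support, -ψ x =
      ∏ η ∈ cycles f, (1 - ∏ x ∈ η, ψ x) := by
  have hterm : ∀ S ∈ (cycles f).powerset, ∏ η ∈ S, -∏ x ∈ η, ψ x =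
      ((Perm.sign (cyclePerm f S) : ℤ) : R) * ∏ x ∈ (cyclePerm f S).support, -ψ x := by
    intro S hS
    rw [mem_powerset] at hS
    rw [sign_cyclePerm hf hS, support_cyclePerm hf, cycleSupport_eq_biUnion hS,
      prod_biUnion (pairwiseDisjoint_cycles.subset hS)]
    push_cast
    rw [← prod_mul_distrib]
    refine prod_congr rfl fun η _ => ?_
    rw [id, prod_neg, ← mul_assoc, neg_mul, ← mul_pow, neg_mul_neg, one_mul, one_pow,
      neg_one_mul]
  calc _ = ∑ S ∈ (cycles f).powerset, ∏ η ∈ S, -∏ x ∈ η, ψ x :=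
        (sum_nbij' (cyclePerm f) (fun σ => σ.support.image (orbit f))
          (fun _ _ => cyclePerm_mem_compatiblePerms)
          (fun _ hσ => mem_powerset.2 (image_orbit_support_subset_cycles hσ))
          (fun _ hS => image_orbit_support_cyclePerm hf (mem_powerset.1 hS))
          (fun _ hσ => cyclePerm_image_orbit_support hσ) hterm).symm
    _ = _ := by
      simp_rw [sub_eq_add_neg]
      exact (prod_one_add _).symm

theorem prod_cycles_one_sub_eq_zero_of_apply_apply_eq {R : Type*} [CommRing R]
    {ψ : V → V → R} (hfv : f v ≠ v) (h : f (f v) = v) (hψ : ψ v (f v) * ψ (f v) v = 1) :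
    ∏ η ∈ cycles f, (1 - ∏ x ∈ η, ψ x (f x)) = 0 :=
  prod_eq_zero (pair_mem_cycles h) (by rw [prod_pair hfv.symm, h, hψ, sub_self])

end FunctionalGraph

open FunctionalGraph

section connectionLaplacian

variable {V R : Type*} [Fintype V] [DecidableEq V] [CommRing R]

def connectionLaplacian (a ψ : V → V → R) : Matrix V V R :=
  Matrix.of fun v u => if v = u then ∑ w, a v w else -a u v * ψ u v

theorem det_connectionLaplacian_eq_sum_compatiblePerms (a ψ : V → V → R) :
    (connectionLaplacian a ψ).det = ∑ g : V → V, (∏ x, a x (g x)) *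
      ∑ σ ∈ compatiblePerms g, ((Perm.sign σ : ℤ) : R) * ∏ x ∈ σ.support, -ψ x (g x) := by
  set choices : Perm V → V → Finset V := fun σ x => if σ x = x then univ else {σ x}
  have hentry : ∀ (σ : Perm V) x, connectionLaplacian a ψ (σ x) x =
      ∑ w ∈ choices σ x, (if σ x = x then 1 else -ψ x w) * a x w := by
    intro σ x
    by_cases h : σ x = x <;> simp [connectionLaplacian, choices, h, mul_comm]
  have hmem : ∀ (σ : Perm V) (g : V → V),
      g ∈ Fintype.piFinset (choices σ) ↔ σ ∈ compatiblePerms g := by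
    intro σ g
    simp only [Fintype.mem_piFinset, mem_compatiblePerms, choices]
    refine forall_congr' fun x => ?_
    by_cases h : σ x = x <;> simp [h, eq_comm]
  have hprod : ∀ (σ : Perm V) (g : V → V),
      ∏ x, (if σ x = x then 1 else -ψ x (g x)) * a x (g x) =
        (∏ x ∈ σ.support, -ψ x (g x)) * ∏ x, a x (g x) := by
    intro σ g
    simp_rw [prod_mul_distrib, Perm.support, prod_filter, ne_eq, ite_not]
  calc (connectionLaplacian a ψ).det
      = ∑ σ, ∑ g ∈ Fintype.piFinset (choices σ),
          ((Perm.sign σ : ℤ) : R) * ∏ x, (if σ x = x then 1 else -ψ x (g x)) * a x (g x) := by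
        rw [Matrix.det_apply]
        refine sum_congr rfl fun σ _ => ?_
        rw [prod_congr rfl fun x _ => hentry σ x, prod_univ_sum, Units.smul_def, zsmul_eq_mul,
          mul_sum]
    _ = ∑ g, ∑ σ ∈ compatiblePerms g,
          ((Perm.sign σ : ℤ) : R) * ∏ x, (if σ x = x then 1 else -ψ x (g x)) * a x (g x) :=
        sum_comm' (by simp [hmem])
    _ = _ := by
      refine sum_congr rfl fun g _ => ?_
      rw [mul_sum]
      refine sum_congr rfl fun σ _ => ?_
      rw [hprod]
      ring

theorem det_connectionLaplacian {a : V → V → R} (ha : ∀ v, a v v = 0) (ψ : V → V → R) :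
    (connectionLaplacian a ψ).det =
      ∑ g : V → V, (∏ x, a x (g x)) * ∏ η ∈ cycles g, (1 - ∏ x ∈ η, ψ x (g x)) := by
  rw [det_connectionLaplacian_eq_sum_compatiblePerms]
  refine sum_congr rfl fun g _ => ?_
  by_cases hg : ∃ x, g x = x
  · obtain ⟨x, hx⟩ := hg
    rw [prod_eq_zero (mem_univ x) (by rw [hx, ha]), zero_mul, zero_mul]
  · rw [sum_compatiblePerms_sign_mul_prod_support fun x hx => hg ⟨x, hx⟩]

end connectionLaplacian

/-- An OCRSF is encoded by the function `f : V → V` sending each vertex to the head of its unique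
outgoing edge (tree edges oriented towards the cycle of their component, cycle edges oriented
by the chosen orientation); the conditions `G.Adj v (f v)` and `f (f v) ≠ v` characterize
exactly such encodings.  The cycles of `γ` are the orbits of `f` on its periodic points, and
the monodromy of a cycle `η` is `Π_{v ∈ η} φ v (f v)`. -/
theorem det_lineBundleLaplacian_eq_sum_ocrsf {V : Type*} [Fintype V] [DecidableEq V]
    (G : SimpleGraph V) [DecidableRel G.Adj]
    (c : Sym2 V → ℂ) (φ : V → V → ℂ)
    (hφne : ∀ u v, G.Adj u v → φ u v ≠ 0)
    (hφinv : ∀ u v, G.Adj u v → φ v u = (φ u v)⁻¹) :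
    let Δ : Matrix V V ℂ := Matrix.of fun v u =>
      if v = u then ∑ w, if G.Adj v w then c s(v, w) else 0
      else if G.Adj u v then -c s(u, v) * φ u v else 0
    let ocrsfs : Finset (V → V) :=
      Finset.univ.filter fun f => (∀ v, G.Adj v (f v)) ∧ ∀ v, f (f v) ≠ v
    let periodicPts : (V → V) → Finset V := fun f =>
      Finset.univ.filter fun v =>
        ((Finset.Icc 1 (Fintype.card V)).filter fun n => f^[n] v = v).Nonempty
    let orbit : (V → V) → V → Finset V := fun f v =>
      Finset.image (fun k => f^[k] v) (Finset.range (Fintype.card V))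
    let cycles : (V → V) → Finset (Finset V) := fun f => Finset.image (orbit f) (periodicPts f)
    Δ.det = ∑ f ∈ ocrsfs,
      (∏ v, c s(v, f v)) * ∏ η ∈ cycles f, (1 - ∏ v ∈ η, φ v (f v)) := by
  intro Δ ocrsfs periodicPts orbit cycles
  have hΔ : Δ = connectionLaplacian (fun u v => if G.Adj u v then c s(u, v) else 0) φ := by
    ext v u
    by_cases h : G.Adj u v <;> simp [Δ, connectionLaplacian, h]
  rw [hΔ, det_connectionLaplacian (fun v => if_neg (G.irrefl (v := v))),
    ← sum_subset (subset_univ ocrsfs)]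
  · refine sum_congr rfl fun f hf => ?_
    rw [prod_congr rfl fun v _ => if_pos ((mem_filter.1 hf).2.1 v)]
    rfl
  · intro f _ hf
    by_cases hadj : ∀ v, G.Adj v (f v)
    · obtain ⟨v, hv⟩ : ∃ v, f (f v) = v := by simpa [ocrsfs, hadj] using hf
      have hψ : φ v (f v) * φ (f v) v = 1 := by
        rw [hφinv _ _ (hadj v), mul_inv_cancel₀ (hφne _ _ (hadj v))]
      rw [prod_cycles_one_sub_eq_zero_of_apply_apply_eq (hadj v).ne' hv hψ, mul_zero]
    · obtain ⟨v, hv⟩ := not_forall.1 hadj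
      rw [prod_eq_zero (mem_univ v) (if_neg hv), zero_mul]
end
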